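/- arXiv:0905.2065 — 5 statements merged into one kernel-verified Lean document; each statement's English description precedes it below -/
import Mathlib

section
/- Let G be a generalized group such that x·y = y·x for all x, y ∈ G. Then e(x) = e(y) for all x, y ∈ G; consequently G has a single two-sided identity element and G is a group. -/
structure GeneralizedGroup (G : Type*) where
  mul : G → G → G
  e : G → G
  inv : G → G
  mul_assoc : ∀ x y z : G, mul (mul x y) z = mul x (mul y z)
  mul_e : ∀ x : G, mul x (e x) = x
  e_mul : ∀ x : G, mul (e x) x = x
  e_unique : ∀ x u : G, mul x u = x → mul u x = x → u = e x
  mul_inv : ∀ x : G, mul x (inv x) = e x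
  inv_mul : ∀ x : G, mul (inv x) x = e x

namespace GeneralizedGroup

variable {G : Type*} (GG : GeneralizedGroup G)

/-- `e x` is a two-sided identity for `x y`, so uniqueness of identities applies. -/
theorem e_mul_eq_e_left {x y : G} (hy : GG.mul y (GG.e x) = GG.mul (GG.e x) y) :
    GG.e (GG.mul x y) = GG.e x := by
  refine (GG.e_unique _ _ ?_ ?_).symm
  · calc GG.mul (GG.mul x y) (GG.e x)
        = GG.mul x (GG.mul (GG.e x) y) := by rw [GG.mul_assoc, hy]
      _ = GG.mul x y := by rw [← GG.mul_assoc, GG.mul_e]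
  · rw [← GG.mul_assoc, GG.e_mul]

theorem e_eq_e_of_comm (hcomm : ∀ x y : G, GG.mul x y = GG.mul y x) (x y : G) :
    GG.e x = GG.e y := by
  rw [← GG.e_mul_eq_e_left (hcomm y (GG.e x)), ← GG.e_mul_eq_e_left (hcomm x (GG.e y)),
    hcomm]

end GeneralizedGroup

/-- A commutative generalized group has a single two-sided identity element and
is a group. -/
theorem generalizedGroup_comm_is_group {G : Type*} [Nonempty G]
    (GG : GeneralizedGroup G) (hcomm : ∀ x y : G, GG.mul x y = GG.mul y x) :
    (∀ x y : G, GG.e x = GG.e y) ∧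
    ∃ ε : G, (∀ x : G, GG.mul x ε = x ∧ GG.mul ε x = x) ∧
      (∀ x : G, GG.mul x (GG.inv x) = ε ∧ GG.mul (GG.inv x) x = ε) := by
  have he := GG.e_eq_e_of_comm hcomm
  obtain ⟨a⟩ := ‹Nonempty G›
  refine ⟨he, GG.e a, fun x => ?_, fun x => ?_⟩
  · rw [he a x]
    exact ⟨GG.mul_e x, GG.e_mul x⟩
  · rw [he a x]
    exact ⟨GG.mul_inv x, GG.inv_mul x⟩
end

section
/- Let G and H be generalized groups and let f : G → H be a homomorphism. Then for every a ∈ G, f(a⁻¹) = (f(a))⁻¹. -/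
namespace GeneralizedGroup

section Basic

variable {G : Type*} (g : GeneralizedGroup G)

lemma e_mul_e (x : G) : g.mul (g.e x) (g.e x) = g.e x := by
  calc g.mul (g.e x) (g.e x) = g.mul (g.mul (g.e x) x) (g.inv x) := by
        rw [g.mul_assoc, g.mul_inv]
    _ = g.e x := by rw [g.e_mul, g.mul_inv]

lemma e_e (x : G) : g.e (g.e x) = g.e x :=
  (g.e_unique _ _ (g.e_mul_e x) (g.e_mul_e x)).symm

lemma e_mul_e_inv (x : G) : g.mul (g.e x) (g.e (g.inv x)) = g.e x := by
  rw [← g.mul_inv x, g.mul_assoc, g.mul_e]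

lemma e_inv_mul_e (x : G) : g.mul (g.e (g.inv x)) (g.e x) = g.e x := by
  rw [← g.inv_mul x, ← g.mul_assoc, g.e_mul]

lemma e_inv (x : G) : g.e (g.inv x) = g.e x := by
  rw [← g.e_e x]
  exact g.e_unique _ _ (g.e_mul_e_inv x) (g.e_inv_mul_e x)

lemma inv_mul_e (x : G) : g.mul (g.inv x) (g.e x) = g.inv x := by
  rw [← g.e_inv x, g.mul_e]

lemma e_mul_inv (x : G) : g.mul (g.e x) (g.inv x) = g.inv x := by
  rw [← g.e_inv x, g.e_mul]

lemma eq_inv_of_mul_eq_e {x y : G} (hyx : g.mul y x = g.e x) (hye : g.mul y (g.e x) = y) :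
    y = g.inv x :=
  calc y = g.mul y (g.mul x (g.inv x)) := by rw [g.mul_inv, hye]
    _ = g.mul (g.e x) (g.inv x) := by rw [← g.mul_assoc, hyx]
    _ = g.inv x := g.e_mul_inv x

end Basic

def IsHom {G H : Type*} (g : GeneralizedGroup G) (h : GeneralizedGroup H) (f : G → H) : Prop :=
  ∀ a b : G, f (g.mul a b) = h.mul (f a) (f b)

namespace IsHom

variable {G H : Type*} {g : GeneralizedGroup G} {h : GeneralizedGroup H} {f : G → H}

lemma map_e (hf : IsHom g h f) (a : G) : f (g.e a) = h.e (f a) :=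
  h.e_unique _ _ (by rw [← hf, g.mul_e]) (by rw [← hf, g.e_mul])

lemma map_inv (hf : IsHom g h f) (a : G) : f (g.inv a) = h.inv (f a) :=
  h.eq_inv_of_mul_eq_e (by rw [← hf, g.inv_mul, hf.map_e])
    (by rw [← hf.map_e, ← hf, g.inv_mul_e])

end IsHom

end GeneralizedGroup

theorem generalizedGroup_hom_inv_general {G H : Type*}
    (GGg : GeneralizedGroup G) (GGh : GeneralizedGroup H) (f : G → H)
    (hf : ∀ a b : G, f (GGg.mul a b) = GGh.mul (f a) (f b)) :
    ∀ a : G, f (GGg.inv a) = GGh.inv (f a) :=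
  GeneralizedGroup.IsHom.map_inv hf

/-- A homomorphism of generalized groups maps inverses to inverses:
`f a⁻¹ = (f a)⁻¹`. -/
theorem generalizedGroup_hom_inv {G H : Type*} [Nonempty G] [Nonempty H]
    (GGg : GeneralizedGroup G) (GGh : GeneralizedGroup H) (f : G → H)
    (hf : ∀ a b : G, f (GGg.mul a b) = GGh.mul (f a) (f b)) :
    ∀ a : G, f (GGg.inv a) = GGh.inv (f a) :=
  generalizedGroup_hom_inv_general GGg GGh f hf
end

section
/- Let G and H be generalized groups, let f : G → H be a homomorphism, and for a ∈ G define ker f_a = {x ∈ G : f(x) = f(e_G(a))}. Then for every a ∈ G, ker f_a is a generalized subgroup of G: it is nonempty and for all x, y ∈ ker f_a one has x·y⁻¹ ∈ ker f_a. -/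
/-! The kernel `ker f_a` is the fibre of `f` over `k = f (e a)`. Homomorphisms carry identities
to identities, so `k = e k` and `f (e y) = e (f y) = k` for every `y` in the fibre; hence
`f (x * y⁻¹) = k * f y⁻¹ = f (y * y⁻¹) = f (e y) = k`. -/

namespace GeneralizedGroup

variable {G H : Type*}

lemma e_mul_e_s11 (GG : GeneralizedGroup G) (a : G) : GG.mul (GG.e a) (GG.e a) = GG.e a := by
  apply GG.e_unique a
  · rw [← GG.mul_assoc, GG.mul_e, GG.mul_e]
  · rw [GG.mul_assoc, GG.e_mul, GG.e_mul]

lemma e_e_s11 (GG : GeneralizedGroup G) (a : G) : GG.e (GG.e a) = GG.e a :=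
  (GG.e_unique _ _ (GG.e_mul_e_s11 a) (GG.e_mul_e_s11 a)).symm

lemma map_e (GGg : GeneralizedGroup G) (GGh : GeneralizedGroup H) {f : G → H}
    (hf : ∀ a b : G, f (GGg.mul a b) = GGh.mul (f a) (f b)) (x : G) :
    f (GGg.e x) = GGh.e (f x) :=
  GGh.e_unique _ _ (by rw [← hf, GGg.mul_e]) (by rw [← hf, GGg.e_mul])

end GeneralizedGroup

open GeneralizedGroup in
theorem generalizedGroup_ker_subgroup_general {G H : Type*}
    (GGg : GeneralizedGroup G) (GGh : GeneralizedGroup H) (f : G → H)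
    (hf : ∀ a b : G, f (GGg.mul a b) = GGh.mul (f a) (f b)) :
    ∀ a : G, ({x : G | f x = f (GGg.e a)}).Nonempty ∧
      ∀ x ∈ {x : G | f x = f (GGg.e a)}, ∀ y ∈ {x : G | f x = f (GGg.e a)},
        GGg.mul x (GGg.inv y) ∈ {x : G | f x = f (GGg.e a)} := by
  intro a
  refine ⟨⟨GGg.e a, rfl⟩, fun x (hx : f x = _) y (hy : f y = _) => ?_⟩
  have hk : GGh.e (f (GGg.e a)) = f (GGg.e a) := by
    rw [← map_e GGg GGh hf, e_e_s11]
  show f (GGg.mul x (GGg.inv y)) = f (GGg.e a)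
  calc f (GGg.mul x (GGg.inv y))
      = GGh.mul (f y) (f (GGg.inv y)) := by rw [hf, hx, hy]
    _ = f (GGg.e y) := by rw [← hf, GGg.mul_inv]
    _ = f (GGg.e a) := by rw [map_e GGg GGh hf, hy, hk]

/-- For a homomorphism `f` of generalized groups and `a ∈ G`, the kernel
`ker f_a = {x : f x = f (e a)}` is a generalized subgroup of `G`. -/
theorem generalizedGroup_ker_subgroup {G H : Type*} [Nonempty G] [Nonempty H]
    (GGg : GeneralizedGroup G) (GGh : GeneralizedGroup H) (f : G → H)
    (hf : ∀ a b : G, f (GGg.mul a b) = GGh.mul (f a) (f b)) :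
    ∀ a : G, ({x : G | f x = f (GGg.e a)}).Nonempty ∧
      ∀ x ∈ {x : G | f x = f (GGg.e a)}, ∀ y ∈ {x : G | f x = f (GGg.e a)},
        GGg.mul x (GGg.inv y) ∈ {x : G | f x = f (GGg.e a)} :=
  generalizedGroup_ker_subgroup_general GGg GGh f hf
end

section
/- Let G be a semigroup (a set with an associative multiplication), let H be a group, and let φ : H → G be a multiplication-preserving map (φ(h₁h₂) = φ(h₁)φ(h₂)), regarded as realizing H as a subgroup of G. On A = H × G define (h₁, g₁)∘(h₂, g₂) = (h₁h₂, φ(h₂)·g₁·φ(h₂⁻¹)·g₂). Then (A, ∘) satisfies the (right) Bol identity: ((x∘y)∘z)∘y = x∘((y∘z)∘y) for all x, y, z ∈ A; that is, (A, ∘) is a Bol groupoid. -/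
/-!
Write `x = (a, u)`, `y = (b, v)`, `z = (c, w)`. Both sides of the Bol identity have first
coordinate `abcb`. Expanding the second coordinates, the left side is
`φ(b)φ(c)φ(b) u φ(b⁻¹) v φ(c⁻¹) w φ(b⁻¹) v` and the right side is
`φ(bcb) u φ((bcb)⁻¹) φ(b)φ(c) v φ(c⁻¹) w φ(b⁻¹) v`; they agree because multiplicativity of `φ`
turns `φ((bcb)⁻¹)φ(b)φ(c)` into `φ(b⁻¹)`. All cancellation happens inside `H`, so `G` needs
no identity.
-/

section

variable {G H : Type*} [Group H]

def twistedMul [Mul G] (φ : H →ₙ* G) (p q : H × G) : H × G :=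
  (p.1 * q.1, φ q.1 * p.2 * φ q.1⁻¹ * q.2)

lemma map_mul_inv_mul_map_mul [Semigroup G] (φ : H →ₙ* G) (h k : H) (t : G) :
    φ (k * h)⁻¹ * (φ k * t) = φ h⁻¹ * t := by
  rw [← mul_assoc, ← map_mul, mul_inv_rev, inv_mul_cancel_right]

theorem twistedMul_bol [Semigroup G] (φ : H →ₙ* G) (x y z : H × G) :
    twistedMul φ (twistedMul φ (twistedMul φ x y) z) y =
      twistedMul φ x (twistedMul φ (twistedMul φ y z) y) := by
  obtain ⟨a, u⟩ := x
  obtain ⟨b, v⟩ := y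
  obtain ⟨c, w⟩ := z
  refine Prod.ext (by simp only [twistedMul, mul_assoc]) ?_
  simp only [twistedMul, mul_assoc, map_mul_inv_mul_map_mul, map_mul]

end

/-- Given a semigroup `G`, a group `H` embedded in `G` via a
multiplication-preserving map `φ`, the operation
`(h₁, g₁) ∘ (h₂, g₂) = (h₁h₂, φ(h₂)·g₁·φ(h₂⁻¹)·g₂)` on `A = H × G`
satisfies the (right) Bol identity: `(A, ∘)` is a Bol groupoid. -/
theorem bol_groupoid_construction {G H : Type*} [Semigroup G] [Group H]
    (φ : H → G) (hφ : ∀ h₁ h₂ : H, φ (h₁ * h₂) = φ h₁ * φ h₂) :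
    ∀ x y z : H × G,
      (fun p q : H × G => (p.1 * q.1, φ q.1 * p.2 * φ q.1⁻¹ * q.2))
        ((fun p q : H × G => (p.1 * q.1, φ q.1 * p.2 * φ q.1⁻¹ * q.2))
          ((fun p q : H × G => (p.1 * q.1, φ q.1 * p.2 * φ q.1⁻¹ * q.2)) x y) z) y =
      (fun p q : H × G => (p.1 * q.1, φ q.1 * p.2 * φ q.1⁻¹ * q.2)) x
        ((fun p q : H × G => (p.1 * q.1, φ q.1 * p.2 * φ q.1⁻¹ * q.2))
          ((fun p q : H × G => (p.1 * q.1, φ q.1 * p.2 * φ q.1⁻¹ * q.2)) y z) y) :=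
  twistedMul_bol ⟨φ, hφ⟩
end

section
/- Let G be a generalized group in which both the left and right cancellation laws hold (a·b = a·c implies b = c, and b·a = c·a implies b = c), let H be a group, and let φ : H → G be a multiplication-preserving map (φ(h₁h₂) = φ(h₁)φ(h₂)), regarded as realizing H as a subgroup of G. On A = H × G define (h₁, g₁)∘(h₂, g₂) = (h₁h₂, φ(h₂)·g₁·φ(h₂⁻¹)·g₂). Then (A, ∘) is a quasigroup satisfying the Bol identity ((x∘y)∘z)∘y = x∘((y∘z)∘y), and (A, ∘) possesses a left identity element: for all a, b ∈ A the equations a∘x = b and y∘a = b have unique solutions x, y ∈ A, and there exists ℓ ∈ A with ℓ∘x = x for all x ∈ A. -/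
/-- The generalized-group operation on `A = H × G` used to construct a Bol
structure: `(h₁, g₁) ∘ (h₂, g₂) = (h₁h₂, φ(h₂)·g₁·φ(h₂⁻¹)·g₂)`. -/
def bolOp {G H : Type*} [Group H] (GG : GeneralizedGroup G) (φ : H → G) :
    H × G → H × G → H × G :=
  fun p q => (p.1 * q.1, GG.mul (GG.mul (GG.mul (φ q.1) p.2) (φ q.1⁻¹)) q.2)

namespace GeneralizedGroup

variable {G : Type*} (GG : GeneralizedGroup G)

theorem e_mul_of_left_cancel (hlc : ∀ a b c : G, GG.mul a b = GG.mul a c → b = c) (x y : G) :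
    GG.mul (GG.e x) y = y :=
  hlc x _ _ (by rw [← GG.mul_assoc, GG.mul_e])

theorem mul_e_of_right_cancel (hrc : ∀ a b c : G, GG.mul b a = GG.mul c a → b = c) (x y : G) :
    GG.mul y (GG.e x) = y :=
  hrc x _ _ (by rw [GG.mul_assoc, GG.e_mul])

theorem e_eq_of_cancel (hlc : ∀ a b c : G, GG.mul a b = GG.mul a c → b = c)
    (hrc : ∀ a b c : G, GG.mul b a = GG.mul c a → b = c) (x y : G) : GG.e x = GG.e y :=
  GG.e_unique y _ (GG.mul_e_of_right_cancel hrc x y) (GG.e_mul_of_left_cancel hlc x y)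

/-- Its multiplication is `GG.mul` itself, so `bolOp` agrees with `bolMul` by `rfl`. -/
noncomputable abbrev toGroup [Nonempty G] (hlc : ∀ a b c : G, GG.mul a b = GG.mul a c → b = c)
    (hrc : ∀ a b c : G, GG.mul b a = GG.mul c a → b = c) : Group G where
  mul := GG.mul
  one := GG.e (Classical.arbitrary G)
  inv := GG.inv
  mul_assoc := GG.mul_assoc
  one_mul := GG.e_mul_of_left_cancel hlc _
  mul_one := GG.mul_e_of_right_cancel hrc _
  inv_mul_cancel x := (GG.inv_mul x).trans (GG.e_eq_of_cancel hlc hrc x _)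

end GeneralizedGroup

section BolMul

variable {G H : Type*} [Group G] [Group H] (f : H →* G)

/-- `bolOp` over a genuine group `G` and a homomorphism `f : H →* G`. -/
def bolMul (p q : H × G) : H × G :=
  (p.1 * q.1, f q.1 * p.2 * f q.1⁻¹ * q.2)

theorem bolMul_left_bijective (a : H × G) : Function.Bijective (bolMul f a) := by
  refine Function.bijective_iff_has_inverse.mpr
    ⟨fun b => (a.1⁻¹ * b.1, (f (a.1⁻¹ * b.1) * a.2 * f (a.1⁻¹ * b.1)⁻¹)⁻¹ * b.2), ?_, ?_⟩
  · intro x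
    ext <;> simp only [bolMul, map_mul, map_inv] <;> group
  · intro b
    ext <;> simp only [bolMul, map_mul, map_inv] <;> group

theorem bolMul_right_bijective (a : H × G) : Function.Bijective (bolMul f · a) := by
  refine Function.bijective_iff_has_inverse.mpr
    ⟨fun b => (b.1 * a.1⁻¹, (f a.1)⁻¹ * (b.2 * a.2⁻¹) * f a.1), ?_, ?_⟩
  · intro y
    ext <;> simp only [bolMul, map_inv] <;> group
  · intro b
    ext <;> simp only [bolMul, map_inv] <;> group

theorem bolMul_bol (x y z : H × G) :
    bolMul f (bolMul f (bolMul f x y) z) y = bolMul f x (bolMul f (bolMul f y z) y) := by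
  ext <;> simp only [bolMul, map_mul, map_inv] <;> group

theorem one_bolMul (x : H × G) : bolMul f 1 x = x := by
  ext <;> simp [bolMul]

end BolMul

/-- If `G` is a generalized group satisfying both cancellation laws and `H` is a
group embedded in `G` via a multiplication-preserving map `φ`, then `A = H × G`
with `(h₁, g₁) ∘ (h₂, g₂) = (h₁h₂, φ(h₂)·g₁·φ(h₂⁻¹)·g₂)` is a Bol quasigroup
with a left identity element. -/
theorem bol_quasigroup_construction {G H : Type*} [Nonempty G] [Group H]
    (GG : GeneralizedGroup G)
    (hlc : ∀ a b c : G, GG.mul a b = GG.mul a c → b = c)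
    (hrc : ∀ a b c : G, GG.mul b a = GG.mul c a → b = c)
    (φ : H → G) (hφ : ∀ h₁ h₂ : H, φ (h₁ * h₂) = GG.mul (φ h₁) (φ h₂)) :
    (∀ a b : H × G, ∃! x : H × G, bolOp GG φ a x = b) ∧
    (∀ a b : H × G, ∃! y : H × G, bolOp GG φ y a = b) ∧
    (∀ x y z : H × G,
      bolOp GG φ (bolOp GG φ (bolOp GG φ x y) z) y =
      bolOp GG φ x (bolOp GG φ (bolOp GG φ y z) y)) ∧
    (∃ ℓ : H × G, ∀ x : H × G, bolOp GG φ ℓ x = x) := by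
  let _ : Group G := GG.toGroup hlc hrc
  have hop : bolOp GG φ = bolMul (MonoidHom.mk' φ hφ) := rfl
  rw [hop]
  exact ⟨fun a => (Function.bijective_iff_existsUnique _).mp (bolMul_left_bijective _ a),
    fun a => (Function.bijective_iff_existsUnique _).mp (bolMul_right_bijective _ a),
    bolMul_bol _, ⟨1, one_bolMul _⟩⟩
end
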